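/- arXiv:2603.19215 — 2 statements merged into one kernel-verified Lean document; each statement's English description precedes it below -/
import Mathlib

section
/- Over the field 𝔽₂ with two elements, let F̃ = T₀²T₁ + T₀T₁² + T₂³ + T₂²T₃ + T₃³ + T₁(T₁² + T₂T₃ + T₂² + T₃²) ∈ 𝔽₂[T₀,T₁,T₂,T₃]. Then: (a) the surface F̃ = 0 is smooth, i.e., over an algebraic closure of 𝔽₂ there is no nonzero common zero of F̃ and its four partial derivatives; and (b) the only nonzero zero of F̃ in 𝔽₂⁴ is (1,0,0,0), so the surface has exactly one 𝔽₂-rational point. -/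
/-!
In characteristic `2` the partial derivatives of `F̃` are `T₁²`, `T₀² + T₁² + T₂T₃ + T₂² + T₃²`,
`T₂² + T₁T₃` and `T₂² + T₃² + T₁T₂`. At a common zero they force, in turn, `T₁² = 0`, `T₂² = 0`,
`T₃² = 0` and `T₀² = 0`, so over any reduced ring the only common zero is the origin.
The `𝔽₂`-points are found by checking the fifteen nonzero vectors of `𝔽₂⁴`.
-/

open MvPolynomial

/-- The surface `F = 0` is smooth: `F` together with its four partial derivatives
has no common nonzero zero over an algebraic closure of `k`. -/
def IsSmoothCubicSurface {k : Type*} [Field k] (F : MvPolynomial (Fin 4) k) : Prop :=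
  ∀ x : Fin 4 → AlgebraicClosure k, x ≠ 0 →
    ¬ (MvPolynomial.eval x (MvPolynomial.map (algebraMap k (AlgebraicClosure k)) F) = 0 ∧
      ∀ i : Fin 4, MvPolynomial.eval x
        (MvPolynomial.map (algebraMap k (AlgebraicClosure k)) (MvPolynomial.pderiv i F)) = 0)

/-- The form `F̃`: the terms `2T₀(b₀T₂² + b₁T₂T₃ + b₂T₃²)` of `F_{b₀,b₁,b₂}` vanish modulo `2`. -/
noncomputable def cubicFormMod2 : MvPolynomial (Fin 4) (ZMod 2) :=
  X 0 ^ 2 * X 1 + X 0 * X 1 ^ 2 + X 2 ^ 3 + X 2 ^ 2 * X 3 + X 3 ^ 3 +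
    X 1 * (X 1 ^ 2 + X 2 * X 3 + X 2 ^ 2 + X 3 ^ 2)

namespace cubicFormMod2

theorem two_eq_zero : (2 : MvPolynomial (Fin 4) (ZMod 2)) = 0 := CharTwo.two_eq_zero

theorem pderiv_zero : pderiv 0 cubicFormMod2 = X 1 ^ 2 := by
  simp only [cubicFormMod2, map_add, Derivation.leibniz, Derivation.leibniz_pow, pderiv_X,
    Pi.single_apply, smul_eq_mul, nsmul_eq_mul, Fin.reduceEq, if_true, if_false]
  linear_combination (X 0 * X 1) * two_eq_zero

theorem pderiv_one :
    pderiv 1 cubicFormMod2 = X 0 ^ 2 + X 1 ^ 2 + X 2 * X 3 + X 2 ^ 2 + X 3 ^ 2 := by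
  simp only [cubicFormMod2, map_add, Derivation.leibniz, Derivation.leibniz_pow, pderiv_X,
    Pi.single_apply, smul_eq_mul, nsmul_eq_mul, Fin.reduceEq, if_true, if_false]
  linear_combination (X 0 * X 1 + X 1 ^ 2) * two_eq_zero

theorem pderiv_two : pderiv 2 cubicFormMod2 = X 2 ^ 2 + X 1 * X 3 := by
  simp only [cubicFormMod2, map_add, Derivation.leibniz, Derivation.leibniz_pow, pderiv_X,
    Pi.single_apply, smul_eq_mul, nsmul_eq_mul, Fin.reduceEq, if_true, if_false]
  linear_combination (X 2 ^ 2 + X 2 * X 3 + X 1 * X 2) * two_eq_zero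

theorem pderiv_three : pderiv 3 cubicFormMod2 = X 2 ^ 2 + X 3 ^ 2 + X 1 * X 2 := by
  simp only [cubicFormMod2, map_add, Derivation.leibniz, Derivation.leibniz_pow, pderiv_X,
    Pi.single_apply, smul_eq_mul, nsmul_eq_mul, Fin.reduceEq, if_true, if_false]
  linear_combination (X 3 ^ 2 + X 1 * X 3) * two_eq_zero

theorem eq_zero_of_eval₂_pderiv_eq_zero {R : Type*} [CommRing R] [IsReduced R]
    (f : ZMod 2 →+* R) {x : Fin 4 → R} (h : ∀ i, eval₂ f x (pderiv i cubicFormMod2) = 0) :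
    x = 0 := by
  have h0 := h 0
  have h1 := h 1
  have h2 := h 2
  have h3 := h 3
  rw [pderiv_zero] at h0
  rw [pderiv_one] at h1
  rw [pderiv_two] at h2
  rw [pderiv_three] at h3
  simp only [eval₂_add, eval₂_mul, eval₂_pow, eval₂_X] at h0 h1 h2 h3
  have e1 : x 1 = 0 := IsReduced.eq_zero _ ⟨2, h0⟩
  have e2 : x 2 = 0 := IsReduced.eq_zero _ ⟨2, by simpa [e1] using h2⟩
  have e3 : x 3 = 0 := IsReduced.eq_zero _ ⟨2, by simpa [e1, e2] using h3⟩
  have e0 : x 0 = 0 := IsReduced.eq_zero _ ⟨2, by simpa [e1, e2, e3] using h1⟩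
  funext i
  fin_cases i <;> assumption

theorem isSmoothCubicSurface : IsSmoothCubicSurface cubicFormMod2 := fun x hx ⟨_, hd⟩ =>
  hx <| eq_zero_of_eval₂_pderiv_eq_zero _ fun i => by simpa only [eval_map] using hd i

theorem eval_eq_zero_iff :
    ∀ v : Fin 4 → ZMod 2, v ≠ 0 → (eval v cubicFormMod2 = 0 ↔ v = ![1, 0, 0, 0]) := by
  simp only [cubicFormMod2, eval_add, eval_mul, eval_pow, eval_X]
  decide

end cubicFormMod2

/-- Over `𝔽₂`, the cubic form
`F̃ = T₀²T₁ + T₀T₁² + T₂³ + T₂²T₃ + T₃³ + T₁(T₁² + T₂T₃ + T₂² + T₃²)` defines a smooth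
surface, and its only nonzero zero in `𝔽₂⁴` is `(1,0,0,0)`: the surface has exactly
one `𝔽₂`-rational point. -/
theorem stmt8 :
    let F : MvPolynomial (Fin 4) (ZMod 2) :=
      MvPolynomial.X 0 ^ 2 * MvPolynomial.X 1 + MvPolynomial.X 0 * MvPolynomial.X 1 ^ 2 +
        MvPolynomial.X 2 ^ 3 + MvPolynomial.X 2 ^ 2 * MvPolynomial.X 3 +
        MvPolynomial.X 3 ^ 3 +
        MvPolynomial.X 1 * (MvPolynomial.X 1 ^ 2 + MvPolynomial.X 2 * MvPolynomial.X 3 +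
          MvPolynomial.X 2 ^ 2 + MvPolynomial.X 3 ^ 2)
    IsSmoothCubicSurface F ∧
      ∀ v : Fin 4 → ZMod 2, v ≠ 0 → (MvPolynomial.eval v F = 0 ↔ v = ![1, 0, 0, 0]) :=
  ⟨cubicFormMod2.isSmoothCubicSurface, cubicFormMod2.eval_eq_zero_iff⟩
end

section
/- Let p be a prime and let F(x,y,z) = z + F₂(x,y,z) + F₃(x,y,z) be a polynomial over ℚ_p, where F₂ and F₃ are homogeneous of degrees 2 and 3 respectively. Let D ∈ ℚ_p be a non-square and let K = ℚ_p(√D) be the quadratic extension obtained by adjoining a square root of D. Suppose (Aᵢ) and (Bᵢ) are sequences in ℚ_p³ with Bᵢ ≠ 0 for all i, Aᵢ → (0,0,0) and Bᵢ → (0,0,0) in the p-adic topology, such that F(Aᵢ + √D·Bᵢ) = 0 in K for every i. Then: (a) for every i one has ∇F(Aᵢ)·Bᵢ + D·F₃(Bᵢ) = 0, where ∇F denotes the vector of the three partial derivatives of F; and (b) if vᵢ = p^{mᵢ}·Bᵢ with mᵢ ∈ ℤ chosen so that the sup norm of vᵢ equals 1, and the sequence vᵢ converges to a vector v ∈ ℚ_p³,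 then the third coordinate of v is 0; that is, every limit of the normalized secant directions lies in the tangent plane z = 0 of the surface F = 0 at the origin. -/
/-!
Restricted to the line `t ↦ A + t • B`, the cubic `F` becomes `c₀ + c₁ t + c₂ t² + c₃ t³` with
`c₁ = ∇F(A) · B` and `c₃ = F₃(B)`. At `t = √D` this reads `(c₀ + D c₂) + (c₁ + D c₃) √D = 0`, and
since `D` is not a square, `1` and `√D` are linearly independent over `ℚ_p`, so `c₁ + D c₃ = 0`.

For the normalized directions `vᵢ = cᵢ • Bᵢ`, homogeneity of `F₃` turns this into
`∇F(Aᵢ) · vᵢ = -D cᵢ⁻² F₃(vᵢ)`, where `‖cᵢ⁻¹‖ = ‖Bᵢ‖ → 0`. In the limit `∇F(0) · w = 0`, and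
`∇F(0) · w = w₂` because `F₂` and `F₃` have no linear terms.
-/

open MvPolynomial Filter

namespace MvPolynomial

variable {R σ : Type*} [CommSemiring R]

theorem aeval_monomial_eq_multiset_prod {S : Type*} [CommSemiring S] [Algebra R S] (x : σ → S)
    (e : σ →₀ ℕ) (r : R) :
    aeval x (monomial e r) = algebraMap R S r * (e.toMultiset.map x).prod := by
  rw [aeval_monomial, Finsupp.toMultiset_map, Finsupp.prod_toMultiset,
    Finsupp.prod_mapDomain_index (fun _ => pow_zero _) (fun _ _ _ => pow_add _ _ _)]

theorem IsHomogeneous.card_toMultiset {G : MvPolynomial σ R} {n : ℕ} (hG : G.IsHomogeneous n)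
    {e : σ →₀ ℕ} (he : e ∈ G.support) : Multiset.card e.toMultiset = n := by
  rw [Finsupp.card_toMultiset, ← hG (mem_support_iff.mp he), Finsupp.weight_apply]
  simp [Finsupp.sum]

theorem IsHomogeneous.aeval_smul {S : Type*} [CommSemiring S] [Algebra R S]
    {G : MvPolynomial σ R} {n : ℕ} (hG : G.IsHomogeneous n) (c : S) (x : σ → S) :
    MvPolynomial.aeval (c • x) G = c ^ n * MvPolynomial.aeval x G := by
  conv_lhs => rw [G.as_sum]
  conv_rhs => rw [G.as_sum]
  simp only [map_sum, Finset.mul_sum]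
  refine Finset.sum_congr rfl fun e he => ?_
  simp only [aeval_monomial_eq_multiset_prod, Pi.smul_apply, smul_eq_mul, Multiset.prod_map_mul,
    Multiset.map_const', Multiset.prod_replicate, hG.card_toMultiset he]
  ring

theorem derivative_aeval [Fintype σ] (g : σ → Polynomial R) (G : MvPolynomial σ R) :
    Polynomial.derivative (aeval g G) =
      ∑ j, aeval g (pderiv j G) * Polynomial.derivative (g j) := by
  classical
  induction G using MvPolynomial.induction_on with
  | C r => simp
  | add G H hG hH => simp [hG, hH, add_mul, Finset.sum_add_distrib]
  | mul_X G i hG =>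
    simp only [map_mul, aeval_X, Polynomial.derivative_mul, hG, Finset.sum_mul,
      Derivation.leibniz, pderiv_X, Pi.single_apply, smul_eq_mul, mul_ite, mul_one, mul_zero,
      map_add, apply_ite (aeval g), map_zero, add_mul, ite_mul, zero_mul, Finset.sum_add_distrib,
      Finset.sum_ite_eq, Finset.mem_univ, if_true]
    rw [add_comm]
    exact congr_arg _ (Finset.sum_congr rfl fun _ _ => by ring)

noncomputable def dirDeriv [Fintype σ] (G : MvPolynomial σ R) (a v : σ → R) : R :=
  ∑ j, eval a (pderiv j G) * v j

theorem dirDeriv_smul [Fintype σ] (G : MvPolynomial σ R) (a v : σ → R) (c : R) :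
    dirDeriv G a (c • v) = c * dirDeriv G a v := by
  simp only [dirDeriv, Finset.mul_sum, Pi.smul_apply, smul_eq_mul]
  exact Finset.sum_congr rfl fun _ _ => by ring

theorem tendsto_dirDeriv [Fintype σ] [TopologicalSpace R] [IsTopologicalSemiring R]
    {ι : Type*} {l : Filter ι} (G : MvPolynomial σ R) {a v : ι → σ → R} {a₀ v₀ : σ → R}
    (ha : Tendsto a l (nhds a₀)) (hv : Tendsto v l (nhds v₀)) :
    Tendsto (fun i => dirDeriv G (a i) (v i)) l (nhds (dirDeriv G a₀ v₀)) :=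
  tendsto_finsetSum _ fun j _ =>
    (((continuous_eval _).tendsto a₀).comp ha).mul (tendsto_pi_nhds.1 hv j)

section LineRestriction

/-- The coordinates of the line `t ↦ a + t • b`, as polynomials in `t`. -/
noncomputable def line (a b : σ → R) (j : σ) : Polynomial R :=
  Polynomial.C (b j) * Polynomial.X + Polynomial.C (a j)

noncomputable def lineRestriction (a b : σ → R) : MvPolynomial σ R →ₐ[R] Polynomial R :=
  aeval (line a b)

variable (a b : σ → R)

theorem natDegree_line_le (j : σ) : (line a b j).natDegree ≤ 1 :=
  Polynomial.natDegree_linear_le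

theorem coeff_one_line (j : σ) : (line a b j).coeff 1 = b j := by
  simp [line]

theorem aeval_lineRestriction {S : Type*} [CommSemiring S] [Algebra R S] (s : S)
    (G : MvPolynomial σ R) :
    Polynomial.aeval s (lineRestriction a b G) =
      aeval (fun j => algebraMap R S (a j) + s * algebraMap R S (b j)) G := by
  simp_rw [add_comm (algebraMap R S _), mul_comm s]
  simp [lineRestriction, line, comp_aeval_apply]

theorem coeff_zero_lineRestriction (G : MvPolynomial σ R) :
    (lineRestriction a b G).coeff 0 = eval a G := by
  simpa [← Polynomial.coeff_zero_eq_aeval_zero] using aeval_lineRestriction a b (0 : R) G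

theorem coeff_one_lineRestriction [Fintype σ] (G : MvPolynomial σ R) :
    (lineRestriction a b G).coeff 1 = dirDeriv G a b := by
  have h := congr_arg (Polynomial.coeff · 0) (derivative_aeval (line a b) G)
  simpa [Polynomial.coeff_derivative, Polynomial.finsetSum_coeff,
    ← coeff_zero_lineRestriction a b, lineRestriction, line, dirDeriv] using h

theorem lineRestriction_monomial (e : σ →₀ ℕ) (r : R) :
    lineRestriction a b (monomial e r) =
      Polynomial.C r * (e.toMultiset.map (line a b)).prod :=
  aeval_monomial_eq_multiset_prod _ e r

variable {a b}

theorem IsHomogeneous.natDegree_lineRestriction_le {G : MvPolynomial σ R} {n : ℕ}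
    (hG : G.IsHomogeneous n) : (lineRestriction a b G).natDegree ≤ n := by
  rw [G.as_sum, map_sum]
  refine Polynomial.natDegree_sum_le_of_forall_le _ _ fun e he => ?_
  rw [lineRestriction_monomial, ← hG.card_toMultiset he]
  refine (Polynomial.natDegree_C_mul_le _ _).trans
    ((Polynomial.natDegree_multiset_prod_le _).trans ?_)
  refine (Multiset.sum_le_card_nsmul _ 1 ?_).trans (by simp)
  simp only [Multiset.map_map, Multiset.mem_map]
  rintro _ ⟨j, -, rfl⟩
  exact natDegree_line_le a b j

theorem IsHomogeneous.coeff_lineRestriction {G : MvPolynomial σ R} {n : ℕ}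
    (hG : G.IsHomogeneous n) : (lineRestriction a b G).coeff n = eval b G := by
  conv_lhs => rw [G.as_sum]
  conv_rhs => rw [G.as_sum]
  simp only [map_sum, Polynomial.finsetSum_coeff]
  refine Finset.sum_congr rfl fun e he => ?_
  rw [lineRestriction_monomial, Polynomial.coeff_C_mul, ← hG.card_toMultiset he,
    ← mul_one (Multiset.card _), ← Multiset.card_map (line a b),
    Polynomial.coeff_multiset_prod_of_natDegree_le _ _ (by simp [natDegree_line_le])]
  simp [coeff_one_line, ← coe_aeval_eq_eval, aeval_monomial_eq_multiset_prod]

theorem IsHomogeneous.lineRestriction_zero {G : MvPolynomial σ R} {n : ℕ}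
    (hG : G.IsHomogeneous n) :
    lineRestriction 0 b G = Polynomial.C (eval b G) * Polynomial.X ^ n := by
  have hline : line 0 b = (Polynomial.X : Polynomial R) • fun j => Polynomial.C (b j) := by
    ext1 j
    simp [line]
  rw [lineRestriction, hline, hG.aeval_smul, mul_comm]
  congr 1
  simpa using (comp_aeval_apply (Algebra.ofId R (Polynomial R)) (f := b) G).symm

end LineRestriction

section QuadraticExtension

variable {k K : Type*} [Field k] [Field K] [Algebra k K] {D : k} {s : K}

theorem eq_zero_of_add_mul_sqrt_eq_zero (hD : ¬∃ r, r ^ 2 = D) (hs : s ^ 2 = algebraMap k K D)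
    {x y : k} (h : algebraMap k K x + algebraMap k K y * s = 0) : y = 0 := by
  by_contra hy
  have hy' : algebraMap k K y ≠ 0 := by simpa using hy
  have hsx : s = algebraMap k K (-x / y) := by
    rw [map_div₀, map_neg, eq_div_iff hy']
    linear_combination h
  exact hD ⟨-x / y, (algebraMap k K).injective (by rw [map_pow, ← hsx, hs])⟩

theorem aeval_sqrt_of_natDegree_le_three (hs : s ^ 2 = algebraMap k K D) {q : Polynomial k}
    (hq : q.natDegree ≤ 3) :
    Polynomial.aeval s q = algebraMap k K (q.coeff 0 + D * q.coeff 2) +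
      algebraMap k K (q.coeff 1 + D * q.coeff 3) * s := by
  have hs3 : s ^ 3 = algebraMap k K D * s := by rw [pow_succ, hs]
  rw [Polynomial.aeval_eq_sum_range' (Nat.lt_succ_of_le hq)]
  simp only [Finset.sum_range_succ, Finset.sum_range_zero, pow_zero, pow_one, hs, hs3,
    Algebra.smul_def, map_add, map_mul]
  ring

theorem dirDeriv_add_mul_eval_eq_zero {σ : Type*} [Fintype σ]
    (hD : ¬∃ r, r ^ 2 = D) (hs : s ^ 2 = algebraMap k K D) {F₁ F₂ F₃ : MvPolynomial σ k}
    (h₁ : F₁.IsHomogeneous 1) (h₂ : F₂.IsHomogeneous 2) (h₃ : F₃.IsHomogeneous 3)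
    {a b : σ → k}
    (h : aeval (fun j => algebraMap k K (a j) + s * algebraMap k K (b j)) (F₁ + F₂ + F₃) = 0) :
    dirDeriv (F₁ + F₂ + F₃) a b + D * eval b F₃ = 0 := by
  set q := lineRestriction a b (F₁ + F₂ + F₃)
  have hq : q.natDegree ≤ 3 := by
    simp only [q, map_add]
    refine Polynomial.natDegree_add_le_of_degree_le (Polynomial.natDegree_add_le_of_degree_le
      ?_ ?_) h₃.natDegree_lineRestriction_le
    · exact h₁.natDegree_lineRestriction_le.trans (by norm_num)
    · exact h₂.natDegree_lineRestriction_le.trans (by norm_num)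
  have hq3 : q.coeff 3 = eval b F₃ := by
    simp only [q, map_add, Polynomial.coeff_add, h₃.coeff_lineRestriction,
      Polynomial.coeff_eq_zero_of_natDegree_lt
        (h₁.natDegree_lineRestriction_le.trans_lt (by norm_num : 1 < 3)),
      Polynomial.coeff_eq_zero_of_natDegree_lt
        (h₂.natDegree_lineRestriction_le.trans_lt (by norm_num : 2 < 3)), zero_add]
  rw [← coeff_one_lineRestriction, ← hq3]
  refine eq_zero_of_add_mul_sqrt_eq_zero hD hs (x := q.coeff 0 + D * q.coeff 2) ?_
  rw [← aeval_sqrt_of_natDegree_le_three hs hq, aeval_lineRestriction, h]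

end QuadraticExtension

theorem eval_eq_zero_of_tendsto_smul {ι 𝕜 σ : Type*} [NormedField 𝕜] [Fintype σ]
    {F₁ F₂ F₃ : MvPolynomial σ 𝕜}
    (h₁ : F₁.IsHomogeneous 1) (h₂ : F₂.IsHomogeneous 2) (h₃ : F₃.IsHomogeneous 3) {D : 𝕜}
    {l : Filter ι} [l.NeBot] {A B : ι → σ → 𝕜} {c : ι → 𝕜} {w : σ → 𝕜}
    (hA : Tendsto A l (nhds 0)) (hcB : Tendsto (fun i => c i • B i) l (nhds w))
    (hc : Tendsto (fun i => (c i)⁻¹) l (nhds 0))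
    (hAB : ∀ i, dirDeriv (F₁ + F₂ + F₃) (A i) (B i) + D * eval (B i) F₃ = 0) :
    eval w F₁ = 0 := by
  have hlim : Tendsto (fun i => dirDeriv (F₁ + F₂ + F₃) (A i) (c i • B i)) l
      (nhds (dirDeriv (F₁ + F₂ + F₃) 0 w)) :=
    tendsto_dirDeriv _ hA hcB
  have hlim0 : Tendsto (fun i => dirDeriv (F₁ + F₂ + F₃) (A i) (c i • B i)) l (nhds 0) := by
    have hscaled : ∀ i, dirDeriv (F₁ + F₂ + F₃) (A i) (c i • B i) =
        -(D * ((c i)⁻¹ ^ 2 * eval (c i • B i) F₃)) := by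
      intro i
      have hF₃ : eval (c i • B i) F₃ = c i ^ 3 * eval (B i) F₃ := by
        simpa using h₃.aeval_smul (c i) (B i)
      rw [dirDeriv_smul, eq_neg_of_add_eq_zero_left (hAB i), hF₃]
      rcases eq_or_ne (c i) 0 with hci | hci
      · simp [hci]
      · field_simp
    have h0 := (((hc.pow 2).mul ((continuous_eval F₃).tendsto w |>.comp hcB)).const_mul D).neg
    rw [zero_pow two_ne_zero, zero_mul, mul_zero, neg_zero] at h0
    simpa only [hscaled, Function.comp_apply] using h0
  have hw : dirDeriv (F₁ + F₂ + F₃) 0 w = eval w F₁ := by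
    rw [← coeff_one_lineRestriction, map_add, map_add, h₁.lineRestriction_zero,
      h₂.lineRestriction_zero, h₃.lineRestriction_zero]
    simp
  rw [← hw]
  exact tendsto_nhds_unique hlim hlim0

end MvPolynomial

theorem tendsto_inv_of_norm_smul_eq_one {ι 𝕜 E : Type*} [NormedField 𝕜]
    [SeminormedAddCommGroup E] [NormedSpace 𝕜 E] {l : Filter ι} {c : ι → 𝕜} {x : ι → E}
    (h : ∀ i, ‖c i • x i‖ = 1) (hx : Tendsto x l (nhds 0)) :
    Tendsto (fun i => (c i)⁻¹) l (nhds 0) := by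
  have hnorm : ∀ i, ‖(c i)⁻¹‖ = ‖x i‖ := by
    intro i
    have hi := h i
    rw [norm_smul] at hi
    rw [norm_inv, inv_eq_of_mul_eq_one_right hi]
  rw [tendsto_zero_iff_norm_tendsto_zero]
  simpa [hnorm] using hx.norm

theorem stmt9_general (p : ℕ) [Fact p.Prime]
    (F₂ F₃ : MvPolynomial (Fin 3) ℚ_[p])
    (hF₂ : F₂.IsHomogeneous 2) (hF₃ : F₃.IsHomogeneous 3)
    (F : MvPolynomial (Fin 3) ℚ_[p]) (hF : F = MvPolynomial.X 2 + F₂ + F₃)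
    (D : ℚ_[p]) (hD : ¬ ∃ r : ℚ_[p], r ^ 2 = D)
    (K : Type) [Field K] [Algebra ℚ_[p] K] (sqrtD : K)
    (hsqrtD : sqrtD ^ 2 = algebraMap ℚ_[p] K D)
    (A B : ℕ → (Fin 3 → ℚ_[p]))
    (hA : Tendsto A atTop (nhds 0)) (hBlim : Tendsto B atTop (nhds 0))
    (hzero : ∀ i, MvPolynomial.eval
        (fun j => algebraMap ℚ_[p] K (A i j) + sqrtD * algebraMap ℚ_[p] K (B i j))
        (MvPolynomial.map (algebraMap ℚ_[p] K) F) = 0) :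
    (∀ i, (∑ j : Fin 3, MvPolynomial.eval (A i) (MvPolynomial.pderiv j F) * B i j) +
        D * MvPolynomial.eval (B i) F₃ = 0) ∧
    (∀ (m : ℕ → ℤ) (w : Fin 3 → ℚ_[p]),
      (∀ i, ‖((p : ℚ_[p]) ^ (m i)) • B i‖ = 1) →
      Tendsto (fun i => ((p : ℚ_[p]) ^ (m i)) • B i) atTop (nhds w) →
      w 2 = 0) := by
  subst hF
  have hdir : ∀ i, dirDeriv (X 2 + F₂ + F₃) (A i) (B i) + D * eval (B i) F₃ = 0 := fun i =>
    dirDeriv_add_mul_eval_eq_zero hD hsqrtD (isHomogeneous_X _ 2) hF₂ hF₃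
      (by rw [aeval_def, ← eval_map]; exact hzero i)
  refine ⟨hdir, fun m w hnorm hlim => ?_⟩
  simpa using eval_eq_zero_of_tendsto_smul (isHomogeneous_X _ 2) hF₂ hF₃ hA hlim
    (tendsto_inv_of_norm_smul_eq_one hnorm hBlim) hdir

/-- Let `F(x,y,z) = z + F₂ + F₃` over `ℚ_p` (`F₂`, `F₃` homogeneous of degrees 2, 3),
let `D` be a non-square and `K = ℚ_p(√D)`.  If `Aᵢ, Bᵢ → 0` in `ℚ_p³` with `Bᵢ ≠ 0` and
`F(Aᵢ + √D·Bᵢ) = 0` in `K` for all `i`, then: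
(a) `∇F(Aᵢ)·Bᵢ + D·F₃(Bᵢ) = 0` for every `i`; and
(b) whenever `vᵢ = p^{mᵢ}·Bᵢ` have sup norm `1` and converge to some `w`, the third
coordinate of `w` is `0`, i.e. every limit of normalized secant directions lies in the
tangent plane `z = 0` at the origin. -/
theorem stmt9 (p : ℕ) [Fact p.Prime]
    (F₂ F₃ : MvPolynomial (Fin 3) ℚ_[p])
    (hF₂ : F₂.IsHomogeneous 2) (hF₃ : F₃.IsHomogeneous 3)
    (F : MvPolynomial (Fin 3) ℚ_[p]) (hF : F = MvPolynomial.X 2 + F₂ + F₃)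
    (D : ℚ_[p]) (hD : ¬ ∃ r : ℚ_[p], r ^ 2 = D)
    (K : Type) [Field K] [Algebra ℚ_[p] K] (sqrtD : K)
    (hsqrtD : sqrtD ^ 2 = algebraMap ℚ_[p] K D)
    (A B : ℕ → (Fin 3 → ℚ_[p])) (hB0 : ∀ i, B i ≠ 0)
    (hA : Tendsto A atTop (nhds 0)) (hBlim : Tendsto B atTop (nhds 0))
    (hzero : ∀ i, MvPolynomial.eval
        (fun j => algebraMap ℚ_[p] K (A i j) + sqrtD * algebraMap ℚ_[p] K (B i j))
        (MvPolynomial.map (algebraMap ℚ_[p] K) F) = 0) :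
    (∀ i, (∑ j : Fin 3, MvPolynomial.eval (A i) (MvPolynomial.pderiv j F) * B i j) +
        D * MvPolynomial.eval (B i) F₃ = 0) ∧
    (∀ (m : ℕ → ℤ) (w : Fin 3 → ℚ_[p]),
      (∀ i, ‖((p : ℚ_[p]) ^ (m i)) • B i‖ = 1) →
      Tendsto (fun i => ((p : ℚ_[p]) ^ (m i)) • B i) atTop (nhds w) →
      w 2 = 0) :=
  stmt9_general p F₂ F₃ hF₂ hF₃ F hF D hD K sqrtD hsqrtD A B hA hBlim hzero
end
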